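/- Let T¹ = [[0,1,3],[0,2,1]] and T² = [[0,4,2],[0,2,0]] in ℝ^(2×3), and define g¹ = [[2,3],[2,1]] and g² = [[3,1],[3,2]] as functions Fin 2 × Fin 2 → Fin 3 (1-indexed). Then g¹ and g² are both IC on T¹ × T², but there are no S¹, S² ∈ ℝ^(2×3) such that both g¹ and g² are affine maximizers on S¹ × S² and IC(S¹) = IC(T¹). -/

import Mathlib

/-!
For a two-row matrix `S`, an assignment `h` is IC iff the tropical `2 × 2` minor on the columns
`h 0, h 1` is attained on the diagonal, `S 0 (h 1) + S 1 (h 0) ≤ S 0 (h 0) + S 1 (h 1)`; this decides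
the eight IC claims and, since `![1, 0]` is not IC for `T¹`, forces
`D := S¹₀₀ + S¹₁₁ - S¹₀₁ - S¹₁₀ > 0` (indices from 0).

An affine maximizer is cyclically monotone: around any cycle of cells the weighted values of the
chosen outcomes dominate those of the outcomes chosen at the next cell, the additive terms `γ - z`
telescoping away. With `X := S²₀₁ + S²₁₂ - S²₀₂ - S²₁₁` and `Y := S¹₀₂ + S¹₁₀ - S¹₀₀ - S¹₁₂`, the
cycles of `g¹` through cells `00, 01, 11` and `01, 11` give `α₂ X ≥ α₁ D > 0` and `Y ≥ 0`, while the
cycle of `g²` through `01, 10, 11` gives `β₁ Y + β₂ X ≤ 0`: a contradiction.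
-/

def IsIC {r m : ℕ} (T : Matrix (Fin r) (Fin m) ℝ) (h : Fin r → Fin m) : Prop :=
  ∃ x : Fin m → ℝ, ∀ i k, T i (h i) - x (h i) ≥ T i k - x k

noncomputable def T13₁ : Matrix (Fin 2) (Fin 3) ℝ := !![0,1,3; 0,2,1]
noncomputable def T13₂ : Matrix (Fin 2) (Fin 3) ℝ := !![0,4,2; 0,2,0]

def g13₁ : Fin 2 → Fin 2 → Fin 3 := ![![1,2], ![1,0]]
def g13₂ : Fin 2 → Fin 2 → Fin 3 := ![![2,0], ![2,1]]

def IsAM2 (S₁ S₂ : Matrix (Fin 2) (Fin 3) ℝ) (g : Fin 2 → Fin 2 → Fin 3) : Prop :=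
  ∃ (α₁ α₂ : ℝ), 0 < α₁ ∧ 0 < α₂ ∧ ∃ (γ z : Fin 3 → ℝ),
    ∀ (i j : Fin 2) (k : Fin 3),
      α₁ * S₁ i (g i j) + α₂ * S₂ j (g i j) + γ (g i j) - z (g i j) ≥
      α₁ * S₁ i k + α₂ * S₂ j k + γ k - z k

theorem isIC_fin_two_iff {m : ℕ} (S : Matrix (Fin 2) (Fin m) ℝ) (h : Fin 2 → Fin m) :
    IsIC S h ↔ S 0 (h 1) + S 1 (h 0) ≤ S 0 (h 0) + S 1 (h 1) := by
  constructor
  · rintro ⟨x, hx⟩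
    linarith [hx 0 (h 1), hx 1 (h 0)]
  · intro hle
    refine ⟨fun k => max (S 0 k - S 0 (h 0)) (S 1 k - S 1 (h 0)), fun i k => ?_⟩
    have hx₀ : max (S 0 (h 0) - S 0 (h 0)) (S 1 (h 0) - S 1 (h 0)) = 0 := by simp
    have hx₁ : max (S 0 (h 1) - S 0 (h 0)) (S 1 (h 1) - S 1 (h 0)) = S 1 (h 1) - S 1 (h 0) :=
      max_eq_right (by linarith)
    fin_cases i
    · simp only [Fin.zero_eta, hx₀]
      linarith [le_max_left (S 0 k - S 0 (h 0)) (S 1 k - S 1 (h 0))]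
    · simp only [Fin.mk_one, hx₁]
      linarith [le_max_right (S 0 k - S 0 (h 0)) (S 1 k - S 1 (h 0))]

theorem sum_sub_finRotate_nonneg_of_forall_le {C K : Type*} {n : ℕ} (w : C → K → ℝ) (u : K → ℝ)
    (g : C → K) (hg : ∀ c k, w c k + u k ≤ w c (g c) + u (g c)) (c : Fin n → C) :
    0 ≤ ∑ t, (w (c t) (g (c t)) - w (c t) (g (c (finRotate n t)))) := by
  have htel : ∑ t, (u (g (c (finRotate n t))) - u (g (c t))) = 0 := by
    rw [Finset.sum_sub_distrib, Equiv.sum_comp (finRotate n) (fun t => u (g (c t))), sub_self]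
  calc 0 = ∑ t, (u (g (c (finRotate n t))) - u (g (c t))) := htel.symm
    _ ≤ _ := Finset.sum_le_sum fun t _ => by linarith [hg (c t) (g (c (finRotate n t)))]

theorem IsAM2.cyclicallyMonotone {S₁ S₂ : Matrix (Fin 2) (Fin 3) ℝ} {g : Fin 2 → Fin 2 → Fin 3}
    (hg : IsAM2 S₁ S₂ g) :
    ∃ α₁ α₂ : ℝ, 0 < α₁ ∧ 0 < α₂ ∧ ∀ {n : ℕ} (c : Fin n → Fin 2 × Fin 2),
      0 ≤ ∑ t,
        (α₁ * (S₁ (c t).1 (g (c t).1 (c t).2)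
            - S₁ (c t).1 (g (c (finRotate n t)).1 (c (finRotate n t)).2))
          + α₂ * (S₂ (c t).2 (g (c t).1 (c t).2)
            - S₂ (c t).2 (g (c (finRotate n t)).1 (c (finRotate n t)).2))) := by
  obtain ⟨α₁, α₂, h₁, h₂, γ, z, hmax⟩ := hg
  refine ⟨α₁, α₂, h₁, h₂, fun c => ?_⟩
  have := sum_sub_finRotate_nonneg_of_forall_le (fun ij k => α₁ * S₁ ij.1 k + α₂ * S₂ ij.2 k)
    (γ - z) (fun ij => g ij.1 ij.2)
    (fun ij k => by simp only [Pi.sub_apply]; linarith [hmax ij.1 ij.2 k]) c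
  simpa only [mul_sub, add_sub_add_comm] using this

section Counterexample

variable {S₁ S₂ : Matrix (Fin 2) (Fin 3) ℝ}

theorem IsAM2.g13₁_lt (hg : IsAM2 S₁ S₂ g13₁) (hS₁ : S₁ 0 1 + S₁ 1 0 < S₁ 0 0 + S₁ 1 1) :
    S₂ 0 2 + S₂ 1 1 < S₂ 0 1 + S₂ 1 2 := by
  obtain ⟨α₁, α₂, h₁, h₂, hcyc⟩ := hg.cyclicallyMonotone
  have h := hcyc ![(0, 0), (0, 1), (1, 1)]
  simp only [Fin.sum_univ_three, finRotate_apply, g13₁, Fin.reduceAdd, Matrix.cons_val] at h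
  nlinarith

theorem IsAM2.g13₁_le (hg : IsAM2 S₁ S₂ g13₁) : S₁ 0 0 + S₁ 1 2 ≤ S₁ 0 2 + S₁ 1 0 := by
  obtain ⟨α₁, α₂, h₁, h₂, hcyc⟩ := hg.cyclicallyMonotone
  have h := hcyc ![(0, 1), (1, 1)]
  simp only [Fin.sum_univ_two, finRotate_apply, g13₁, Fin.reduceAdd, Matrix.cons_val] at h
  nlinarith

theorem IsAM2.g13₂_le (hg : IsAM2 S₁ S₂ g13₂) (hS₁ : S₁ 0 0 + S₁ 1 2 ≤ S₁ 0 2 + S₁ 1 0) :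
    S₂ 0 1 + S₂ 1 2 ≤ S₂ 0 2 + S₂ 1 1 := by
  obtain ⟨α₁, α₂, h₁, h₂, hcyc⟩ := hg.cyclicallyMonotone
  have h := hcyc ![(0, 1), (1, 0), (1, 1)]
  simp only [Fin.sum_univ_three, finRotate_apply, g13₂, Fin.reduceAdd, Matrix.cons_val] at h
  nlinarith

end Counterexample

theorem stmt_13 :
    ((∀ j, IsIC T13₁ (fun i => g13₁ i j)) ∧ (∀ i, IsIC T13₂ (fun j => g13₁ i j)) ∧
     (∀ j, IsIC T13₁ (fun i => g13₂ i j)) ∧ (∀ i, IsIC T13₂ (fun j => g13₂ i j))) ∧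
    ¬ ∃ (S₁ S₂ : Matrix (Fin 2) (Fin 3) ℝ),
        IsAM2 S₁ S₂ g13₁ ∧ IsAM2 S₁ S₂ g13₂ ∧
        {h | IsIC S₁ h} = {h | IsIC T13₁ h} := by
  refine ⟨?_, ?_⟩
  · refine ⟨?_, ?_, ?_, ?_⟩ <;> intro i <;> fin_cases i <;>
      norm_num [isIC_fin_two_iff, T13₁, T13₂, g13₁, g13₂, Matrix.cons_val_two]
  · rintro ⟨S₁, S₂, h₁, h₂, hIC⟩
    have hS₁ : S₁ 0 1 + S₁ 1 0 < S₁ 0 0 + S₁ 1 1 := by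
      have hT : ¬ IsIC T13₁ ![1, 0] := by norm_num [isIC_fin_two_iff, T13₁]
      have hS : ¬ IsIC S₁ ![1, 0] := fun h => hT ((Set.ext_iff.mp hIC _).mp h)
      simpa [isIC_fin_two_iff] using hS
    exact (h₂.g13₂_le h₁.g13₁_le).not_gt (h₁.g13₁_lt hS₁)
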